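/- The connecting operator admits the dynamic representation (C^T f)(t) = (1/2) ∫_0^T (∫_{|t-s|}^{2T-s-t} r(τ) dτ) f(s) ds, where r(t) = ∑_{k=1}^N S_k(t)/ρ_k is the response function; equivalently, for each k, (1/2)∫_{|t-s|}^{2T-s-t} S(τ,λ_k) dτ = S(T-t,λ_k) S(T-s,λ_k) for all 0 ≤ s,t ≤ T. -/

import Mathlib

/-!
For `λ = c²`, `λ = -c²` and `λ = 0` the kernel `S(·,λ)` has the even primitive `-cos(c t)/c²`,
`cosh(c t)/c²` and `t²/2` respectively. So `∫_{|a-b|}^{a+b} S(τ,λ) dτ` is the difference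
of the primitive at `a+b` and `a-b`, and the addition formulas for `cos`/`cosh` turn that into
`2 S(a,λ) S(b,λ)`. Taking `a = T-t`, `b = T-s` gives the product formula, and summing it against
the weights `1/ρₖ` gives the representation of the connecting operator through `r`.
-/

open MeasureTheory

noncomputable def S (t lam : ℝ) : ℝ :=
  if 0 < lam then Real.sin (Real.sqrt lam * t) / Real.sqrt lam
  else if lam < 0 then Real.sinh (Real.sqrt (-lam) * t) / Real.sqrt (-lam)
  else t

noncomputable def SPrimitive (t lam : ℝ) : ℝ :=
  if 0 < lam then -Real.cos (Real.sqrt lam * t) / lam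
  else if lam < 0 then Real.cosh (Real.sqrt (-lam) * t) / (-lam)
  else t ^ 2 / 2

lemma S_sq {c : ℝ} (hc : 0 < c) (t : ℝ) : S t (c ^ 2) = Real.sin (c * t) / c := by
  simp [S, hc.ne', Real.sqrt_sq hc.le]

lemma S_neg_sq {c : ℝ} (hc : 0 < c) (t : ℝ) : S t (-c ^ 2) = Real.sinh (c * t) / c := by
  have hc2 := pow_pos hc 2
  simp [S, hc2, hc2.not_gt, Real.sqrt_sq hc.le]

lemma S_zero (t : ℝ) : S t 0 = t := by simp [S]

lemma SPrimitive_sq {c : ℝ} (hc : 0 < c) (t : ℝ) :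
    SPrimitive t (c ^ 2) = -Real.cos (c * t) / c ^ 2 := by
  simp [SPrimitive, hc.ne', Real.sqrt_sq hc.le]

lemma SPrimitive_neg_sq {c : ℝ} (hc : 0 < c) (t : ℝ) :
    SPrimitive t (-c ^ 2) = Real.cosh (c * t) / c ^ 2 := by
  have hc2 := pow_pos hc 2
  simp [SPrimitive, hc2, hc2.not_gt, Real.sqrt_sq hc.le]

lemma SPrimitive_zero (t : ℝ) : SPrimitive t 0 = t ^ 2 / 2 := by simp [SPrimitive]

lemma eq_neg_sq_or_eq_zero_or_eq_sq (lam : ℝ) :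
    (∃ c, 0 < c ∧ lam = -c ^ 2) ∨ lam = 0 ∨ ∃ c, 0 < c ∧ lam = c ^ 2 := by
  rcases lt_trichotomy lam 0 with h | h | h
  · exact .inl ⟨√(-lam), Real.sqrt_pos.2 (neg_pos.2 h), by rw [Real.sq_sqrt (by linarith)]; ring⟩
  · exact .inr (.inl h)
  · exact .inr (.inr ⟨√lam, Real.sqrt_pos.2 h, (Real.sq_sqrt h.le).symm⟩)

lemma continuous_S (lam : ℝ) : Continuous (fun t => S t lam) := by
  unfold S
  split_ifs <;> fun_prop

lemma hasDerivAt_SPrimitive (t lam : ℝ) :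
    HasDerivAt (fun t => SPrimitive t lam) (S t lam) t := by
  rcases eq_neg_sq_or_eq_zero_or_eq_sq lam with ⟨c, hc, rfl⟩ | rfl | ⟨c, hc, rfl⟩
  · simp only [SPrimitive_neg_sq hc, S_neg_sq hc]
    refine ((((hasDerivAt_id' t).const_mul c).cosh).div_const (c ^ 2)).congr_deriv ?_
    field_simp
  · simpa [SPrimitive_zero, S_zero] using (hasDerivAt_pow 2 t).div_const 2
  · simp only [SPrimitive_sq hc, S_sq hc]
    refine ((((hasDerivAt_id' t).const_mul c).cos.neg).div_const (c ^ 2)).congr_deriv ?_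
    field_simp

lemma SPrimitive_neg (t lam : ℝ) : SPrimitive (-t) lam = SPrimitive t lam := by
  simp only [SPrimitive, mul_neg, Real.cos_neg, Real.cosh_neg, neg_sq]

lemma SPrimitive_abs (t lam : ℝ) : SPrimitive |t| lam = SPrimitive t lam := by
  rcases abs_choice t with h | h <;> rw [h]
  exact SPrimitive_neg t lam

lemma SPrimitive_add_sub_SPrimitive_sub (a b lam : ℝ) :
    SPrimitive (a + b) lam - SPrimitive (a - b) lam = 2 * S a lam * S b lam := by
  rcases eq_neg_sq_or_eq_zero_or_eq_sq lam with ⟨c, hc, rfl⟩ | rfl | ⟨c, hc, rfl⟩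
  · simp only [SPrimitive_neg_sq hc, S_neg_sq hc, mul_add, mul_sub, Real.cosh_add, Real.cosh_sub]
    ring
  · simp only [SPrimitive_zero, S_zero]; ring
  · simp only [SPrimitive_sq hc, S_sq hc, mul_add, mul_sub, Real.cos_add, Real.cos_sub]
    ring

theorem integral_S_abs_sub_add (a b lam : ℝ) :
    ∫ τ in |a - b|..a + b, S τ lam = 2 * S a lam * S b lam := by
  rw [intervalIntegral.integral_eq_sub_of_hasDerivAt (fun τ _ => hasDerivAt_SPrimitive τ lam)
    ((continuous_S lam).intervalIntegrable _ _), SPrimitive_abs,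
    SPrimitive_add_sub_SPrimitive_sub]

theorem half_integral_S_eq_mul (T t s lam : ℝ) :
    (1 / 2) * ∫ τ in |t - s|..2 * T - s - t, S τ lam = S (T - t) lam * S (T - s) lam := by
  have h := integral_S_abs_sub_add (T - t) (T - s) lam
  rw [show (T - t) - (T - s) = -(t - s) by ring, abs_neg,
    show (T - t) + (T - s) = 2 * T - s - t by ring] at h
  rw [h]
  ring

theorem half_integral_sum_S_div {ι : Type*} (u : Finset ι) (lam rho : ι → ℝ) (T t s : ℝ) :
    (1 / 2) * ∫ τ in |t - s|..2 * T - s - t, ∑ k ∈ u, S τ (lam k) / rho k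
      = ∑ k ∈ u, (1 / rho k) * S (T - t) (lam k) * S (T - s) (lam k) := by
  rw [intervalIntegral.integral_finsetSum
    fun k _ => ((continuous_S (lam k)).div_const _).intervalIntegrable _ _, Finset.mul_sum]
  refine Finset.sum_congr rfl fun k _ => ?_
  rw [intervalIntegral.integral_div, mul_div_assoc', half_integral_S_eq_mul]
  ring

theorem connecting_operator_dynamic_representation_general
    (N : ℕ) (T : ℝ)
    (lam : Fin N → ℝ)
    (rho : Fin N → ℝ)
    (r : ℝ → ℝ) (hr : ∀ t : ℝ, r t = ∑ k : Fin N, S t (lam k) / rho k)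
    (Cop : (ℝ → ℝ) → (ℝ → ℝ))
    (hC : ∀ (f : ℝ → ℝ) (t : ℝ),
      Cop f t = ∫ s in (0:ℝ)..T,
        (∑ k : Fin N, (1 / rho k) * S (T - t) (lam k) * S (T - s) (lam k)) * f s) :
    (∀ k : Fin N, ∀ t ∈ Set.Icc (0:ℝ) T, ∀ s ∈ Set.Icc (0:ℝ) T,
        (1 / 2) * (∫ τ in (|t - s|)..(2 * T - s - t), S τ (lam k))
          = S (T - t) (lam k) * S (T - s) (lam k)) ∧
      ∀ (f : ℝ → ℝ), Continuous f → ∀ t ∈ Set.Icc (0:ℝ) T,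
        Cop f t = (1 / 2) * ∫ s in (0:ℝ)..T,
          (∫ τ in (|t - s|)..(2 * T - s - t), r τ) * f s := by
  obtain rfl : r = fun τ => ∑ k : Fin N, S τ (lam k) / rho k := funext hr
  refine ⟨fun k t _ s _ => half_integral_S_eq_mul T t s (lam k), fun f _ t _ => ?_⟩
  rw [hC, ← intervalIntegral.integral_const_mul]
  congr 1
  ext s
  rw [← mul_assoc, half_integral_sum_S_div]

/-- the connecting operator admits the dynamic representation
`(C^T f)(t) = (1/2) ∫₀ᵀ (∫_{|t-s|}^{2T-s-t} r(τ) dτ) f(s) ds` with response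
function `r(t) = ∑ₖ Sₖ(t)/ρₖ`; equivalently, for each `k`,
`(1/2)∫_{|t-s|}^{2T-s-t} S(τ,λₖ) dτ = S(T-t,λₖ) S(T-s,λₖ)` for `0 ≤ s,t ≤ T`. -/
theorem connecting_operator_dynamic_representation
    (N : ℕ) (T : ℝ) (hT : 0 < T)
    (lam : Fin N → ℝ)
    (rho : Fin N → ℝ) (hrhopos : ∀ k, 0 < rho k)
    (r : ℝ → ℝ) (hr : ∀ t : ℝ, r t = ∑ k : Fin N, S t (lam k) / rho k)
    (Cop : (ℝ → ℝ) → (ℝ → ℝ))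
    (hC : ∀ (f : ℝ → ℝ) (t : ℝ),
      Cop f t = ∫ s in (0:ℝ)..T,
        (∑ k : Fin N, (1 / rho k) * S (T - t) (lam k) * S (T - s) (lam k)) * f s) :
    (∀ k : Fin N, ∀ t ∈ Set.Icc (0:ℝ) T, ∀ s ∈ Set.Icc (0:ℝ) T,
        (1 / 2) * (∫ τ in (|t - s|)..(2 * T - s - t), S τ (lam k))
          = S (T - t) (lam k) * S (T - s) (lam k)) ∧
      ∀ (f : ℝ → ℝ), Continuous f → ∀ t ∈ Set.Icc (0:ℝ) T,
        Cop f t = (1 / 2) * ∫ s in (0:ℝ)..T,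
          (∫ τ in (|t - s|)..(2 * T - s - t), r τ) * f s :=
  connecting_operator_dynamic_representation_general N T lam rho r hr Cop hC
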